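/- For every s ≥ 0 and 0 ≤ ε ≤ 1, there is a constant C (independent of c) such that ‖(P_c^± − P_∞^±)u‖_{H^s} ≤ C c^{−ε} ‖u‖_{H^{s+ε}} for all u ∈ H^{s+ε}(ℝ³, ℂ⁴). -/

import Mathlib

open Matrix MeasureTheory FourierTransform ENNReal

noncomputable section

/-- The Pauli matrices σ₁, σ₂, σ₃. -/
def pauli : Fin 3 → Matrix (Fin 2) (Fin 2) ℂ
  | 0 => !![0, 1; 1, 0]
  | 1 => !![0, -Complex.I; Complex.I, 0]
  | 2 => !![1, 0; 0, -1]

/-- The Dirac matrices αₖ = [[0, σₖ], [σₖ, 0]]. -/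
def alphaM (k : Fin 3) : Matrix (Fin 4) (Fin 4) ℂ :=
  Matrix.reindex finSumFinEquiv finSumFinEquiv <|
    Matrix.fromBlocks 0 (pauli k) (pauli k) 0

/-- The Dirac matrix β = diag(I₂, −I₂). -/
def betaM : Matrix (Fin 4) (Fin 4) ℂ :=
  Matrix.reindex finSumFinEquiv finSumFinEquiv <|
    Matrix.fromBlocks (1 : Matrix (Fin 2) (Fin 2) ℂ) 0 0 (-1 : Matrix (Fin 2) (Fin 2) ℂ)

/-- The Fourier symbol of the free Dirac operator D_c = −icα·∇ + mc²β. -/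
def diracSymbol (m c : ℝ) (ξ : EuclideanSpace ℝ (Fin 3)) : Matrix (Fin 4) (Fin 4) ℂ :=
  (m * c ^ 2 : ℂ) • betaM + (c : ℂ) • ∑ k : Fin 3, (ξ k : ℂ) • alphaM k

/-- λ_c(ξ) = √(m²c⁴ + c²|ξ|²), the symbol of |D_c|. -/
def lamc (m c : ℝ) (ξ : EuclideanSpace ℝ (Fin 3)) : ℝ :=
  Real.sqrt (m ^ 2 * c ^ 4 + c ^ 2 * ‖ξ‖ ^ 2)

/-- The Fourier symbol of P_c^± = ½(I ± D_c|D_c|⁻¹); `sgn = ±1`. -/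
def projSymbol (m c sgn : ℝ) (ξ : EuclideanSpace ℝ (Fin 3)) : Matrix (Fin 4) (Fin 4) ℂ :=
  (1 / 2 : ℂ) • ((1 : Matrix (Fin 4) (Fin 4) ℂ) +
    ((sgn / lamc m c ξ : ℝ) : ℂ) • diracSymbol m c ξ)

/-- Pointwise action of a 4×4 matrix on a spinor. -/
def mulVecE (M : Matrix (Fin 4) (Fin 4) ℂ) (v : EuclideanSpace ℂ (Fin 4)) :
    EuclideanSpace ℂ (Fin 4) := (WithLp.equiv 2 _).symm (M.mulVec ((WithLp.equiv 2 _) v))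

/-- The symbol of the block projection P_∞^± onto the first/last two spinor
components: P_∞^± = ½(I₄ ± β), i.e. P_∞^+ = diag(1,1,0,0), P_∞^- = I₄ − P_∞^+. -/
def pinfSymbol (sgn : ℝ) : Matrix (Fin 4) (Fin 4) ℂ :=
  (1 / 2 : ℂ) • ((1 : Matrix (Fin 4) (Fin 4) ℂ) + (sgn : ℂ) • betaM)

/-!
On the Fourier side `P_c^± − P_∞^±` is multiplication by `a β + b α·ξ` with real
`a = ±(mc²/λ_c − 1)/2` and `b = ±c/(2λ_c)`. By the anticommutation relations of the Dirac
matrices this Hermitian matrix squares to `(a² + b²|ξ|²) I = ½(1 − mc²/λ_c) I`, so it scales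
the norm of every spinor by the same factor. That factor is at most `1` and at most
`|ξ|²/(mc)²`, hence at most `(|ξ|²/(mc)²)^ε` for `0 ≤ ε ≤ 1`, which is bounded by
`m^{-2ε} c^{-2ε} (1 + |ξ|²)^ε`; integrating against the `H^s` weight gives the estimate
with `C = m^{-ε}`.
-/

open Matrix

lemma finSumFinEquiv_symm_two_two :
    (finSumFinEquiv.symm : Fin (2 + 2) → Fin 2 ⊕ Fin 2) = ![.inl 0, .inl 1, .inr 0, .inr 1] := by
  funext i
  fin_cases i <;> rfl

def alphaDot (ξ : EuclideanSpace ℝ (Fin 3)) : Matrix (Fin 4) (Fin 4) ℂ :=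
  ∑ k : Fin 3, (ξ k : ℂ) • alphaM k

lemma betaM_eq : betaM = !![1, 0, 0, 0; 0, 1, 0, 0; 0, 0, -1, 0; 0, 0, 0, -1] := by
  ext i j
  fin_cases i <;> fin_cases j <;> simp [betaM, fromBlocks, finSumFinEquiv_symm_two_two]

lemma alphaDot_eq (ξ : EuclideanSpace ℝ (Fin 3)) :
    alphaDot ξ =
      !![0, 0, (ξ 2 : ℂ), ξ 0 - ξ 1 * Complex.I;
         0, 0, ξ 0 + ξ 1 * Complex.I, -ξ 2;
         ξ 2, ξ 0 - ξ 1 * Complex.I, 0, 0;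
         ξ 0 + ξ 1 * Complex.I, -ξ 2, 0, 0] := by
  ext i j
  simp only [alphaDot, Matrix.sum_apply, Fin.sum_univ_three, Matrix.smul_apply]
  fin_cases i <;> fin_cases j <;>
    simp [alphaM, pauli, fromBlocks, finSumFinEquiv_symm_two_two, sub_eq_add_neg]

lemma conjTranspose_betaM : betaMᴴ = betaM := by
  rw [betaM_eq]
  ext i j
  fin_cases i <;> fin_cases j <;> simp

lemma conjTranspose_alphaDot (ξ : EuclideanSpace ℝ (Fin 3)) : (alphaDot ξ)ᴴ = alphaDot ξ := by
  rw [alphaDot_eq]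
  ext i j
  fin_cases i <;> fin_cases j <;> simp [sub_eq_add_neg]

lemma betaM_mul_self : betaM * betaM = 1 := by
  rw [betaM_eq]
  ext i j
  fin_cases i <;> fin_cases j <;> simp [mul_apply, Fin.sum_univ_four]

lemma betaM_mul_alphaDot_add_alphaDot_mul_betaM (ξ : EuclideanSpace ℝ (Fin 3)) :
    betaM * alphaDot ξ + alphaDot ξ * betaM = 0 := by
  rw [betaM_eq, alphaDot_eq]
  ext i j
  fin_cases i <;> fin_cases j <;> simp

lemma alphaDot_mul_self (ξ : EuclideanSpace ℝ (Fin 3)) :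
    alphaDot ξ * alphaDot ξ = ((‖ξ‖ ^ 2 : ℝ) : ℂ) • 1 := by
  rw [EuclideanSpace.norm_sq_eq, alphaDot_eq]
  ext i j
  fin_cases i <;> fin_cases j <;> simp [mul_apply, Fin.sum_univ_four, Fin.sum_univ_three] <;>
    ring_nf <;> simp [Complex.I_sq]

lemma conjTranspose_mul_self_smul_betaM_add_smul_alphaDot (a b : ℝ)
    (ξ : EuclideanSpace ℝ (Fin 3)) :
    ((a : ℂ) • betaM + (b : ℂ) • alphaDot ξ)ᴴ * ((a : ℂ) • betaM + (b : ℂ) • alphaDot ξ) =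
      ((a ^ 2 + b ^ 2 * ‖ξ‖ ^ 2 : ℝ) : ℂ) • 1 := by
  simp only [conjTranspose_add, conjTranspose_smul, conjTranspose_betaM, conjTranspose_alphaDot,
    Complex.star_def, Complex.conj_ofReal]
  calc _ = (a ^ 2 : ℂ) • (betaM * betaM)
          + (a * b : ℂ) • (betaM * alphaDot ξ + alphaDot ξ * betaM)
          + (b ^ 2 : ℂ) • (alphaDot ξ * alphaDot ξ) := by
        simp only [add_mul, mul_add, smul_mul_smul, smul_add]
        module
    _ = _ := by
        rw [betaM_mul_self, betaM_mul_alphaDot_add_alphaDot_mul_betaM, alphaDot_mul_self]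
        push_cast
        module

lemma projSymbol_sub_pinfSymbol (m c sgn : ℝ) (ξ : EuclideanSpace ℝ (Fin 3)) :
    projSymbol m c sgn ξ - pinfSymbol sgn =
      ((sgn * (m * c ^ 2 / lamc m c ξ - 1) / 2 : ℝ) : ℂ) • betaM +
        ((sgn * c / lamc m c ξ / 2 : ℝ) : ℂ) • alphaDot ξ := by
  simp only [projSymbol, pinfSymbol, diracSymbol, alphaDot]
  push_cast
  module

lemma lamc_sq (m c : ℝ) (ξ : EuclideanSpace ℝ (Fin 3)) :
    lamc m c ξ ^ 2 = m ^ 2 * c ^ 4 + c ^ 2 * ‖ξ‖ ^ 2 :=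
  Real.sq_sqrt (by positivity)

lemma lamc_pos {m c : ℝ} (hm : m ≠ 0) (hc : c ≠ 0) (ξ : EuclideanSpace ℝ (Fin 3)) :
    0 < lamc m c ξ :=
  Real.sqrt_pos.mpr (by positivity)

lemma norm_toLp_mulVec_sq_of_conjTranspose_mul_self {n : Type*} [Fintype n] [DecidableEq n]
    {M : Matrix n n ℂ} {r : ℝ} (hM : Mᴴ * M = (r : ℂ) • 1) (v : EuclideanSpace ℂ n) :
    ‖WithLp.toLp 2 (M *ᵥ v.ofLp)‖ ^ 2 = r * ‖v‖ ^ 2 := by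
  have hinner : (M *ᵥ v.ofLp) ⬝ᵥ star (M *ᵥ v.ofLp) = (r : ℂ) * (v.ofLp ⬝ᵥ star v.ofLp) := by
    rw [star_mulVec, dotProduct_comm, ← dotProduct_mulVec, mulVec_mulVec, hM, smul_mulVec,
      one_mulVec, dotProduct_smul, smul_eq_mul, dotProduct_comm]
  rw [@norm_sq_eq_re_inner ℂ, @norm_sq_eq_re_inner ℂ, EuclideanSpace.inner_toLp_toLp,
    EuclideanSpace.inner_eq_star_dotProduct, hinner]
  exact RCLike.re_ofReal_mul _ _

lemma norm_mulVecE_projSymbol_sub_pinfSymbol_sq {m c : ℝ} (hm : m ≠ 0) (hc : c ≠ 0) (sgn : ℝ)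
    (ξ : EuclideanSpace ℝ (Fin 3)) (v : EuclideanSpace ℂ (Fin 4)) :
    ‖mulVecE (projSymbol m c sgn ξ - pinfSymbol sgn) v‖ ^ 2 =
      sgn ^ 2 * (1 - m * c ^ 2 / lamc m c ξ) / 2 * ‖v‖ ^ 2 := by
  have hL := (lamc_pos hm hc ξ).ne'
  refine norm_toLp_mulVec_sq_of_conjTranspose_mul_self ?_ v
  rw [projSymbol_sub_pinfSymbol, conjTranspose_mul_self_smul_betaM_add_smul_alphaDot]
  congr 2
  field_simp
  linear_combination (-sgn ^ 2) * lamc_sq m c ξ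

lemma mul_sq_le_lamc (m c : ℝ) (ξ : EuclideanSpace ℝ (Fin 3)) : m * c ^ 2 ≤ lamc m c ξ :=
  (le_abs_self _).trans (Real.abs_le_sqrt (by nlinarith [sq_nonneg (c * ‖ξ‖)]))

lemma one_sub_div_lamc_le {m c : ℝ} (hm : 0 < m) (hc : 0 < c) (ξ : EuclideanSpace ℝ (Fin 3)) :
    1 - m * c ^ 2 / lamc m c ξ ≤ ‖ξ‖ ^ 2 / (m * c) ^ 2 := by
  have hL := lamc_pos hm.ne' hc.ne' ξ
  have hmcL := mul_sq_le_lamc m c ξ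
  calc 1 - m * c ^ 2 / lamc m c ξ
        = c ^ 2 * ‖ξ‖ ^ 2 / (lamc m c ξ * (lamc m c ξ + m * c ^ 2)) := by
        field_simp
        linear_combination lamc_sq m c ξ
    _ ≤ c ^ 2 * ‖ξ‖ ^ 2 / (m * c ^ 2 * (m * c ^ 2)) := by
        gcongr
        linarith
    _ = ‖ξ‖ ^ 2 / (m * c) ^ 2 := by
        field_simp

lemma le_rpow_of_le_one_of_le {x y ε : ℝ} (hx : x ≤ 1) (hy : 0 ≤ y) (hxy : x ≤ y) (hε0 : 0 ≤ ε)
    (hε1 : ε ≤ 1) : x ≤ y ^ ε := by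
  rcases le_total y 1 with hy1 | hy1
  · exact hxy.trans (Real.self_le_rpow_of_le_one hy hy1 hε1)
  · exact hx.trans (Real.one_le_rpow hy1 hε0)

lemma div_mul_sq_rpow {y m c : ℝ} (hy : 0 ≤ y) (hm : 0 ≤ m) (hc : 0 ≤ c) (ε : ℝ) :
    (y / (m * c) ^ 2) ^ ε = (m ^ ε)⁻¹ ^ 2 / c ^ (2 * ε) * y ^ ε := by
  rw [Real.div_rpow hy (by positivity), mul_pow, Real.mul_rpow (by positivity) (by positivity),
    ← Real.rpow_pow_comm hm, ← Real.rpow_natCast_mul hc, Nat.cast_ofNat]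
  field_simp

lemma norm_mulVecE_projSymbol_sub_pinfSymbol_sq_le {m c ε sgn : ℝ} (hm : 0 < m) (hc : 0 < c)
    (hε0 : 0 ≤ ε) (hε1 : ε ≤ 1) (hsgn : sgn ^ 2 = 1) (ξ : EuclideanSpace ℝ (Fin 3))
    (v : EuclideanSpace ℂ (Fin 4)) :
    ‖mulVecE (projSymbol m c sgn ξ - pinfSymbol sgn) v‖ ^ 2 ≤
      (m ^ ε)⁻¹ ^ 2 / c ^ (2 * ε) * (1 + ‖ξ‖ ^ 2) ^ ε * ‖v‖ ^ 2 := by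
  rw [norm_mulVecE_projSymbol_sub_pinfSymbol_sq hm.ne' hc.ne', hsgn, one_mul]
  gcongr
  have hL := lamc_pos hm.ne' hc.ne' ξ
  calc (1 - m * c ^ 2 / lamc m c ξ) / 2 ≤ 1 - m * c ^ 2 / lamc m c ξ := by
        linarith [div_le_one_of_le₀ (mul_sq_le_lamc m c ξ) hL.le]
    _ ≤ (‖ξ‖ ^ 2 / (m * c) ^ 2) ^ ε :=
        le_rpow_of_le_one_of_le (sub_le_self _ (by positivity)) (by positivity)
          (one_sub_div_lamc_le hm hc ξ) hε0 hε1
    _ = (m ^ ε)⁻¹ ^ 2 / c ^ (2 * ε) * (‖ξ‖ ^ 2) ^ ε :=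
        div_mul_sq_rpow (by positivity) hm.le hc.le ε
    _ ≤ (m ^ ε)⁻¹ ^ 2 / c ^ (2 * ε) * (1 + ‖ξ‖ ^ 2) ^ ε := by gcongr; linarith

theorem proj_difference_sobolev_estimate_general (m : ℝ) (hm : 0 < m) (s ε : ℝ)
    (hε0 : 0 ≤ ε) (hε1 : ε ≤ 1) (sgn : ℝ) (hsgn : sgn = 1 ∨ sgn = -1) :
    ∃ C : ℝ, 0 < C ∧ ∀ (c : ℝ), 0 < c →
      ∀ v : EuclideanSpace ℝ (Fin 3) → EuclideanSpace ℂ (Fin 4),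
        ∫⁻ ξ : EuclideanSpace ℝ (Fin 3),
            ENNReal.ofReal ((1 + ‖ξ‖ ^ 2) ^ s) *
              (‖mulVecE (projSymbol m c sgn ξ - pinfSymbol sgn) (v ξ)‖₊ : ℝ≥0∞) ^ 2 ≤
          ENNReal.ofReal (C ^ 2 / c ^ (2 * ε)) *
            ∫⁻ ξ : EuclideanSpace ℝ (Fin 3),
              ENNReal.ofReal ((1 + ‖ξ‖ ^ 2) ^ (s + ε)) * (‖v ξ‖₊ : ℝ≥0∞) ^ 2 := by
  have hsgn' : sgn ^ 2 = 1 := by rcases hsgn with rfl | rfl <;> norm_num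
  refine ⟨(m ^ ε)⁻¹, by positivity, fun c hc v => ?_⟩
  rw [← lintegral_const_mul' _ _ ofReal_ne_top]
  refine lintegral_mono fun ξ => ?_
  have hw : ∀ t : ℝ, 0 ≤ (1 + ‖ξ‖ ^ 2) ^ t := fun t => Real.rpow_nonneg (by positivity) t
  simp only [← enorm_eq_nnnorm, ← ofReal_norm, ← ofReal_pow (norm_nonneg _)]
  rw [← ofReal_mul (hw s), ← ofReal_mul (hw (s + ε)), ← ofReal_mul (by positivity)]
  refine ofReal_le_ofReal ?_
  calc (1 + ‖ξ‖ ^ 2) ^ s * ‖mulVecE (projSymbol m c sgn ξ - pinfSymbol sgn) (v ξ)‖ ^ 2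
      ≤ (1 + ‖ξ‖ ^ 2) ^ s * ((m ^ ε)⁻¹ ^ 2 / c ^ (2 * ε) * (1 + ‖ξ‖ ^ 2) ^ ε * ‖v ξ‖ ^ 2) :=
        mul_le_mul_of_nonneg_left
          (norm_mulVecE_projSymbol_sub_pinfSymbol_sq_le hm hc hε0 hε1 hsgn' ξ (v ξ)) (hw s)
    _ = (m ^ ε)⁻¹ ^ 2 / c ^ (2 * ε) * ((1 + ‖ξ‖ ^ 2) ^ (s + ε) * ‖v ξ‖ ^ 2) := by
        rw [Real.rpow_add (by positivity)]
        ring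

/-- For every s ≥ 0 and 0 ≤ ε ≤ 1 there is a constant C independent of
c such that ‖(P_c^± − P_∞^±)u‖_{H^s} ≤ C c^{−ε} ‖u‖_{H^{s+ε}} for all
u ∈ H^{s+ε}(ℝ³,ℂ⁴).  The Sobolev norms are expressed on the Fourier side:
‖u‖_{H^s}² = ∫ (1+|ξ|²)^s |û(ξ)|² dξ, with v = û ranging over all Fourier profiles. -/
theorem proj_difference_sobolev_estimate (m : ℝ) (hm : 0 < m) (s ε : ℝ)
    (hs : 0 ≤ s) (hε0 : 0 ≤ ε) (hε1 : ε ≤ 1) (sgn : ℝ) (hsgn : sgn = 1 ∨ sgn = -1) :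
    ∃ C : ℝ, 0 < C ∧ ∀ (c : ℝ), 0 < c →
      ∀ v : EuclideanSpace ℝ (Fin 3) → EuclideanSpace ℂ (Fin 4),
        ∫⁻ ξ : EuclideanSpace ℝ (Fin 3),
            ENNReal.ofReal ((1 + ‖ξ‖ ^ 2) ^ s) *
              (‖mulVecE (projSymbol m c sgn ξ - pinfSymbol sgn) (v ξ)‖₊ : ℝ≥0∞) ^ 2 ≤
          ENNReal.ofReal (C ^ 2 / c ^ (2 * ε)) *
            ∫⁻ ξ : EuclideanSpace ℝ (Fin 3),
              ENNReal.ofReal ((1 + ‖ξ‖ ^ 2) ^ (s + ε)) * (‖v ξ‖₊ : ℝ≥0∞) ^ 2 :=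
  proj_difference_sobolev_estimate_general m hm s ε hε0 hε1 sgn hsgn
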